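/- Let Δ° = {(x₁,x₂) ∈ ℝ² : x₁ > 0, x₂ > 0, x₁ + x₂ < 1}, let u_G(x₁,x₂) = (1/2)(x₁ log x₁ − x₁ + x₂ log x₂ − x₂ + (1−x₁−x₂) log(1−x₁−x₂) − (1−x₁−x₂)), and let f be a real-analytic function on an open neighbourhood of [0,1] satisfying 1 + t(1−t) f''(t) > 0 for all t ∈ (0,1). Then the set of critical points of det Hess(u_G + (1/2) f(x₁+x₂)) in Δ° is finite. -/

import Mathlib

open Real Set Topology Filter Matrix

/-- `i`-th partial derivative of a function on `ℝⁿ`. -/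
noncomputable def pd {n : ℕ} (i : Fin n) (f : (Fin n → ℝ) → ℝ) : (Fin n → ℝ) → ℝ :=
  fun x => fderiv ℝ f x (Pi.single i 1)

/-- Hessian matrix of a function on `ℝⁿ`. -/
noncomputable def Hess {n : ℕ} (u : (Fin n → ℝ) → ℝ) (x : Fin n → ℝ) :
    Matrix (Fin n) (Fin n) ℝ :=
  Matrix.of fun i j => pd i (pd j u) x

/-- The orbital volume function `V = (det Hess u)^(-1/2)`. -/
noncomputable def orbVol {n : ℕ} (u : (Fin n → ℝ) → ℝ) : (Fin n → ℝ) → ℝ :=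
  fun x => (Hess u x).det ^ (-(1/2 : ℝ))

/-- Guillemin symplectic potential of `ℂP²` on the standard simplex. -/
noncomputable def uGCP2 : (Fin 2 → ℝ) → ℝ := fun x =>
  (1/2) * (x 0 * Real.log (x 0) - x 0 + x 1 * Real.log (x 1) - x 1
    + (1 - x 0 - x 1) * Real.log (1 - x 0 - x 1) - (1 - x 0 - x 1))

/-- The open standard simplex in `ℝ²`. -/
def simplex2 : Set (Fin 2 → ℝ) := {x | 0 < x 0 ∧ 0 < x 1 ∧ x 0 + x 1 < 1}

/-!
A potential of the form `a x₀ + b x₁ + c (x₀ + x₁)` has Hessian `diag (a'', b'') + c'' J`. For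
`u_G + f (x₀ + x₁) / 2` this gives `det Hess u = φ(s) / (x₀ x₁)` with `s = x₀ + x₁` and
`φ(s) = (1 + s (1 - s) f''(s)) / (4 (1 - s)) > 0`. At a critical point `x₀ φ'(s) = φ(s) = x₁ φ'(s)`,
so `x₀ = x₁` and `s φ'(s) = 2 φ(s)`. Clearing denominators, `s` is a zero of a function analytic
near `[0, 1]` and equal to `-2` at `0`, so there are finitely many such `s`, and each determines
its critical point.
-/

theorem AnalyticOnNhd.finite_zeros_of_isCompact {𝕜 E : Type*} [NontriviallyNormedField 𝕜]
    [NormedAddCommGroup E] [NormedSpace 𝕜 E] {k : 𝕜 → E} {U K : Set 𝕜}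
    (hk : AnalyticOnNhd 𝕜 k U) (hK : IsCompact K) (hKc : IsPreconnected K) (hKU : K ⊆ U)
    {z : 𝕜} (hz : z ∈ K) (hkz : k z ≠ 0) :
    {t ∈ K | k t = 0}.Finite := by
  by_contra hinf
  obtain ⟨t, htK, hacc⟩ :=
    Set.Infinite.exists_accPt_of_subset_isCompact hinf hK (sep_subset _ _)
  have hfreq : ∃ᶠ y in 𝓝[≠] t, k y = 0 :=
    frequently_nhdsWithin_iff.2 <| (accPt_iff_frequently.1 hacc).mono fun _ hy => ⟨hy.2.2, hy.1⟩
  have hKV : K ⊆ connectedComponentIn U z := hKc.subset_connectedComponentIn hz hKU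
  have hkV := hk.mono (connectedComponentIn_subset U z)
  exact hkz <| hkV.eqOn_zero_of_preconnected_of_frequently_eq_zero
    isPreconnected_connectedComponentIn (hKV htK) hfreq (hKV hz)

theorem deriv_deriv_eq_of_eventually_hasDerivAt {g g' : ℝ → ℝ} {t g'' : ℝ}
    (hg : ∀ᶠ y in 𝓝 t, HasDerivAt g (g' y) y) (hg' : HasDerivAt g' g'' t) :
    deriv (deriv g) t = g'' := by
  rw [Filter.EventuallyEq.deriv_eq (hg.mono fun _ hy => hy.deriv), hg'.deriv]

theorem pd_congr {n : ℕ} {F G : (Fin n → ℝ) → ℝ} {x : Fin n → ℝ} (h : F =ᶠ[𝓝 x] G) (i : Fin n) :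
    pd i F x = pd i G x := by
  rw [pd, pd, h.fderiv_eq]

def coordPot (a b c : ℝ → ℝ) : (Fin 2 → ℝ) → ℝ := fun x => a (x 0) + b (x 1) + c (x 0 + x 1)

section coordPot

variable {a b c : ℝ → ℝ} {x : Fin 2 → ℝ}

theorem hasFDerivAt_coordPot {a' b' c' : ℝ} (ha : HasDerivAt a a' (x 0))
    (hb : HasDerivAt b b' (x 1)) (hc : HasDerivAt c c' (x 0 + x 1)) :
    HasFDerivAt (coordPot a b c)
      ((a' + c') • ContinuousLinearMap.proj 0 + (b' + c') • ContinuousLinearMap.proj 1 :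
        (Fin 2 → ℝ) →L[ℝ] ℝ) x := by
  have h0 := hasFDerivAt_apply (𝕜 := ℝ) (0 : Fin 2) x
  have h1 := hasFDerivAt_apply (𝕜 := ℝ) (1 : Fin 2) x
  refine (((ha.comp_hasFDerivAt x h0).add (hb.comp_hasFDerivAt x h1)).add
    (hc.comp_hasFDerivAt x (h0.add h1)) : HasFDerivAt (coordPot a b c) _ x).congr_fderiv ?_
  module

theorem pd_zero_coordPot (ha : DifferentiableAt ℝ a (x 0)) (hb : DifferentiableAt ℝ b (x 1))
    (hc : DifferentiableAt ℝ c (x 0 + x 1)) :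
    pd 0 (coordPot a b c) x = deriv a (x 0) + deriv c (x 0 + x 1) := by
  simp [pd, (hasFDerivAt_coordPot ha.hasDerivAt hb.hasDerivAt hc.hasDerivAt).fderiv]

theorem pd_one_coordPot (ha : DifferentiableAt ℝ a (x 0)) (hb : DifferentiableAt ℝ b (x 1))
    (hc : DifferentiableAt ℝ c (x 0 + x 1)) :
    pd 1 (coordPot a b c) x = deriv b (x 1) + deriv c (x 0 + x 1) := by
  simp [pd, (hasFDerivAt_coordPot ha.hasDerivAt hb.hasDerivAt hc.hasDerivAt).fderiv]

theorem eventually_analyticAt_coordPot (ha : AnalyticAt ℝ a (x 0)) (hb : AnalyticAt ℝ b (x 1))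
    (hc : AnalyticAt ℝ c (x 0 + x 1)) :
    ∀ᶠ y in 𝓝 x, AnalyticAt ℝ a (y 0) ∧ AnalyticAt ℝ b (y 1) ∧ AnalyticAt ℝ c (y 0 + y 1) := by
  have h0 : Tendsto (fun y : Fin 2 → ℝ => y 0) (𝓝 x) (𝓝 (x 0)) := (continuous_apply 0).tendsto x
  have h1 : Tendsto (fun y : Fin 2 → ℝ => y 1) (𝓝 x) (𝓝 (x 1)) := (continuous_apply 1).tendsto x
  exact (h0.eventually ha.eventually_analyticAt).and ((h1.eventually hb.eventually_analyticAt).and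
    ((h0.add h1).eventually hc.eventually_analyticAt))

theorem hess_coordPot (ha : AnalyticAt ℝ a (x 0)) (hb : AnalyticAt ℝ b (x 1))
    (hc : AnalyticAt ℝ c (x 0 + x 1)) :
    Hess (coordPot a b c) x =
      !![deriv (deriv a) (x 0) + deriv (deriv c) (x 0 + x 1), deriv (deriv c) (x 0 + x 1);
         deriv (deriv c) (x 0 + x 1), deriv (deriv b) (x 1) + deriv (deriv c) (x 0 + x 1)] := by
  have hev := eventually_analyticAt_coordPot ha hb hc
  have hpd0 : pd 0 (coordPot a b c) =ᶠ[𝓝 x] coordPot (deriv a) 0 (deriv c) :=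
    hev.mono fun y ⟨ha, hb, hc⟩ => by
      simp [pd_zero_coordPot ha.differentiableAt hb.differentiableAt hc.differentiableAt, coordPot]
  have hpd1 : pd 1 (coordPot a b c) =ᶠ[𝓝 x] coordPot 0 (deriv b) (deriv c) :=
    hev.mono fun y ⟨ha, hb, hc⟩ => by
      simp [pd_one_coordPot ha.differentiableAt hb.differentiableAt hc.differentiableAt, coordPot]
  have ha' := ha.deriv.differentiableAt
  have hb' := hb.deriv.differentiableAt
  have hc' := hc.deriv.differentiableAt
  have h0 : ∀ t, DifferentiableAt ℝ (0 : ℝ → ℝ) t := fun t => differentiableAt_const (0 : ℝ)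
  ext i j
  fin_cases i <;> fin_cases j <;> simp [Hess, pd_congr hpd0, pd_congr hpd1,
    pd_zero_coordPot ha' (h0 _) hc', pd_one_coordPot ha' (h0 _) hc',
    pd_zero_coordPot (h0 _) hb' hc', pd_one_coordPot (h0 _) hb' hc']

end coordPot

theorem eq_and_mul_deriv_eq_of_fderiv_eq_zero {φ : ℝ → ℝ} {φ' : ℝ} {x : Fin 2 → ℝ}
    (hφ : HasDerivAt φ φ' (x 0 + x 1)) (hφ0 : φ (x 0 + x 1) ≠ 0) (hx0 : x 0 ≠ 0) (hx1 : x 1 ≠ 0)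
    (hcrit : fderiv ℝ (fun y => φ (y 0 + y 1) / (y 0 * y 1)) x = 0) :
    x 0 = x 1 ∧ (x 0 + x 1) * φ' = 2 * φ (x 0 + x 1) := by
  have h0 := hasFDerivAt_apply (𝕜 := ℝ) (0 : Fin 2) x
  have h1 := hasFDerivAt_apply (𝕜 := ℝ) (1 : Fin 2) x
  have hG : HasFDerivAt (fun y : Fin 2 → ℝ => φ (y 0 + y 1) * (y 0 * y 1)⁻¹) _ x :=
    (hφ.comp_hasFDerivAt x (h0.add h1)).mul
      ((hasDerivAt_inv (mul_ne_zero hx0 hx1)).comp_hasFDerivAt x (h0.mul h1))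
  simp only [div_eq_mul_inv, hG.fderiv] at hcrit
  have e0 := congrArg (fun L => L (Pi.single 0 1)) hcrit
  have e1 := congrArg (fun L => L (Pi.single 1 1)) hcrit
  simp only [Function.comp_apply, Pi.add_apply, smul_add, neg_smul, smul_neg, _root_.mul_inv_rev,
    _root_.add_apply, _root_.neg_apply, _root_.smul_apply, ContinuousLinearMap.proj_apply,
    ne_eq, one_ne_zero, not_false_eq_true, Pi.single_eq_of_ne, smul_eq_mul, mul_zero, neg_zero,
    Pi.single_eq_same, mul_one, zero_add, add_zero, _root_.zero_apply, zero_ne_one] at e0 e1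
  field_simp at e0 e1
  have hφ' : φ' ≠ 0 := by
    rintro rfl
    exact hφ0 (by linarith)
  exact ⟨mul_right_cancel₀ hφ' (by linarith), by linarith⟩

theorem isOpen_simplex2 : IsOpen simplex2 :=
  (isOpen_lt continuous_const (continuous_apply 0)).inter
    ((isOpen_lt continuous_const (continuous_apply 1)).inter
      (isOpen_lt ((continuous_apply 0).add (continuous_apply 1)) continuous_const))

theorem add_mem_Ioo_of_mem_simplex2 {x : Fin 2 → ℝ} (hx : x ∈ simplex2) :
    x 0 + x 1 ∈ Ioo (0:ℝ) 1 :=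
  ⟨by linarith [hx.1, hx.2.1], hx.2.2⟩

noncomputable def halfEntropy (t : ℝ) : ℝ := (t * log t - t) / 2

theorem potential_eq_coordPot (f : ℝ → ℝ) :
    (fun z => uGCP2 z + (1/2) * f (z 0 + z 1)) =
      coordPot halfEntropy halfEntropy (fun s => halfEntropy (1 - s) + f s / 2) := by
  funext z
  simp only [uGCP2, coordPot, halfEntropy, sub_sub]
  ring

section halfEntropy

variable {t : ℝ}

theorem analyticAt_halfEntropy (ht : 0 < t) : AnalyticAt ℝ halfEntropy t := by
  unfold halfEntropy
  fun_prop (disch := exact analyticAt_log ht)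

theorem hasDerivAt_halfEntropy (ht : 0 < t) : HasDerivAt halfEntropy (log t / 2) t := by
  have h := (((hasDerivAt_id' t).mul (hasDerivAt_log ht.ne')).sub (hasDerivAt_id' t)).div_const 2
  exact (h : HasDerivAt halfEntropy _ t).congr_deriv (by field_simp; ring)

theorem deriv_deriv_halfEntropy (ht : 0 < t) : deriv (deriv halfEntropy) t = (2 * t)⁻¹ := by
  refine deriv_deriv_eq_of_eventually_hasDerivAt
    ((eventually_gt_nhds ht).mono fun _ hy => hasDerivAt_halfEntropy hy) ?_
  exact ((hasDerivAt_log ht.ne').div_const 2).congr_deriv (by ring)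

end halfEntropy

section halfEntropyOneSub

variable {f : ℝ → ℝ} {s : ℝ}

theorem analyticAt_halfEntropy_one_sub_add (hs : s < 1) (hf : AnalyticAt ℝ f s) :
    AnalyticAt ℝ (fun s => halfEntropy (1 - s) + f s / 2) s := by
  have := analyticAt_halfEntropy (sub_pos.2 hs)
  fun_prop

theorem deriv_deriv_halfEntropy_one_sub_add (hs : s < 1) (hf : AnalyticAt ℝ f s) :
    deriv (deriv (fun s => halfEntropy (1 - s) + f s / 2)) s =
      (2 * (1 - s))⁻¹ + deriv (deriv f) s / 2 := by
  have hev : ∀ᶠ y in 𝓝 s, y < 1 ∧ AnalyticAt ℝ f y :=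
    (eventually_lt_nhds hs).and hf.eventually_analyticAt
  refine deriv_deriv_eq_of_eventually_hasDerivAt (g' := fun y => -log (1 - y) / 2 + deriv f y / 2)
    (hev.mono fun y ⟨hy, hfy⟩ => ?_) ?_
  · have h := ((hasDerivAt_halfEntropy (sub_pos.2 hy)).comp y ((hasDerivAt_id' y).const_sub 1)).add
      (hfy.differentiableAt.hasDerivAt.div_const 2)
    exact (h : HasDerivAt (fun s => halfEntropy (1 - s) + f s / 2) _ y).congr_deriv (by ring)
  · have h := (((hasDerivAt_log (sub_pos.2 hs).ne').comp s
      ((hasDerivAt_id' s).const_sub 1)).neg.div_const 2).add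
      (hf.deriv.differentiableAt.hasDerivAt.div_const 2)
    exact (h : HasDerivAt (fun y => -log (1 - y) / 2 + deriv f y / 2) _ s).congr_deriv
      (by field_simp)

end halfEntropyOneSub

noncomputable def detNum (f : ℝ → ℝ) (s : ℝ) : ℝ := 1 + s * (1 - s) * deriv (deriv f) s

theorem det_hess_potential {f : ℝ → ℝ} {x : Fin 2 → ℝ} (hx : x ∈ simplex2)
    (hf : AnalyticAt ℝ f (x 0 + x 1)) :
    (Hess (fun z => uGCP2 z + (1/2) * f (z 0 + z 1)) x).det =
      detNum f (x 0 + x 1) / (4 * (1 - (x 0 + x 1))) / (x 0 * x 1) := by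
  obtain ⟨hx0, hx1, hs⟩ := hx
  rw [potential_eq_coordPot, hess_coordPot (analyticAt_halfEntropy hx0)
    (analyticAt_halfEntropy hx1) (analyticAt_halfEntropy_one_sub_add hs hf), det_fin_two_of,
    deriv_deriv_halfEntropy hx0, deriv_deriv_halfEntropy hx1,
    deriv_deriv_halfEntropy_one_sub_add hs hf, detNum]
  have : 1 - (x 0 + x 1) ≠ 0 := by linarith
  field_simp
  ring

-- For `φ s = detNum f s / (4 (1 - s))`: `s φ'(s) - 2 φ(s) = critFun f s / (4 (1 - s) ^ 2)`.
noncomputable def critFun (f : ℝ → ℝ) (s : ℝ) : ℝ :=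
  s * (1 - s) * deriv (detNum f) s + (3 * s - 2) * detNum f s

theorem analyticAt_detNum {f : ℝ → ℝ} {s : ℝ} (hf : AnalyticAt ℝ f s) :
    AnalyticAt ℝ (detNum f) s := by
  unfold detNum
  fun_prop

theorem analyticOnNhd_critFun {f : ℝ → ℝ} {U : Set ℝ} (hf : AnalyticOnNhd ℝ f U) :
    AnalyticOnNhd ℝ (critFun f) U := fun s hs => by
  have := analyticAt_detNum (hf s hs)
  unfold critFun
  fun_prop

theorem critFun_zero (f : ℝ → ℝ) : critFun f 0 = -2 := by
  norm_num [critFun, detNum]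

theorem eq_and_critFun_eq_zero_of_fderiv_det_hess_eq_zero {f : ℝ → ℝ} {x : Fin 2 → ℝ}
    (hf : ∀ s ∈ Ioo (0:ℝ) 1, AnalyticAt ℝ f s) (hx : x ∈ simplex2)
    (hpos : 0 < detNum f (x 0 + x 1))
    (hcrit : fderiv ℝ
      (fun y => (Hess (fun z => uGCP2 z + (1/2) * f (z 0 + z 1)) y).det) x = 0) :
    x 0 = x 1 ∧ critFun f (x 0 + x 1) = 0 := by
  have hsum {y : Fin 2 → ℝ} (hy : y ∈ simplex2) := add_mem_Ioo_of_mem_simplex2 hy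
  have hs : 0 < 1 - (x 0 + x 1) := by linarith [(hsum hx).2]
  have hdet : (fun y => (Hess (fun z => uGCP2 z + (1/2) * f (z 0 + z 1)) y).det) =ᶠ[𝓝 x]
      fun y => detNum f (y 0 + y 1) / (4 * (1 - (y 0 + y 1))) / (y 0 * y 1) :=
    eventually_of_mem (isOpen_simplex2.mem_nhds hx) fun y hy =>
      det_hess_potential hy (hf _ (hsum hy))
  have hφ := (analyticAt_detNum (hf _ (hsum hx))).differentiableAt.hasDerivAt.div
    (((hasDerivAt_id' _).const_sub (1 : ℝ)).const_mul (4 : ℝ)) (by positivity)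
  obtain ⟨hdiag, hmul⟩ := eq_and_mul_deriv_eq_of_fderiv_eq_zero hφ
    (by simp only [Pi.div_apply]; positivity) hx.1.ne' hx.2.1.ne'
    (by rwa [hdet.fderiv_eq] at hcrit)
  refine ⟨hdiag, ?_⟩
  simp only [Pi.div_apply] at hmul
  rw [critFun]
  field_simp at hmul
  linear_combination hmul

theorem stmt12_general (f : ℝ → ℝ) (U : Set ℝ) (hU1 : Icc (0:ℝ) 1 ⊆ U)
    (hf : AnalyticOnNhd ℝ f U)
    (hpd : ∀ t ∈ Ioo (0:ℝ) 1, 0 < 1 + t * (1 - t) * deriv (deriv f) t) :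
    {x ∈ simplex2 | fderiv ℝ
      (fun y => (Hess (fun z => uGCP2 z + (1/2) * f (z 0 + z 1)) y).det) x = 0}.Finite := by
  have hzeros : {t ∈ Icc (0:ℝ) 1 | critFun f t = 0}.Finite :=
    (analyticOnNhd_critFun hf).finite_zeros_of_isCompact isCompact_Icc isPreconnected_Icc hU1
      (left_mem_Icc.2 zero_le_one) (by norm_num [critFun_zero])
  have hdiag := fun x (hx : x ∈ simplex2) =>
    eq_and_critFun_eq_zero_of_fderiv_det_hess_eq_zero
      (fun s hs => hf s (hU1 (Ioo_subset_Icc_self hs))) hx (hpd _ (add_mem_Ioo_of_mem_simplex2 hx))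
  refine Set.Finite.of_finite_image (f := fun x => x 0 + x 1) (hzeros.subset ?_) ?_
  · rintro _ ⟨x, ⟨hx, hcrit⟩, rfl⟩
    exact ⟨Ioo_subset_Icc_self (add_mem_Ioo_of_mem_simplex2 hx), (hdiag x hx hcrit).2⟩
  · rintro x ⟨hx, hxcrit⟩ y ⟨hy, hycrit⟩ hxy
    have hx01 := (hdiag x hx hxcrit).1
    have hy01 := (hdiag y hy hycrit).1
    exact funext (Fin.forall_fin_two.2 ⟨by linarith, by linarith⟩)

theorem stmt12 (f : ℝ → ℝ) (U : Set ℝ) (hU : IsOpen U) (hU1 : Icc (0:ℝ) 1 ⊆ U)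
    (hf : AnalyticOnNhd ℝ f U)
    (hpd : ∀ t ∈ Ioo (0:ℝ) 1, 0 < 1 + t * (1 - t) * deriv (deriv f) t) :
    {x ∈ simplex2 | fderiv ℝ
      (fun y => (Hess (fun z => uGCP2 z + (1/2) * f (z 0 + z 1)) y).det) x = 0}.Finite :=
  stmt12_general f U hU1 hf hpd
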